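/- arXiv:2204.04389 — 3 statements merged into one kernel-verified Lean document; each statement's English description precedes it below -/
import Mathlib

section
/- Let G be an abelian topological group and C ⊆ G a quasi-convex subset. Then for every positive integer n: (a) the set C₍ₙ₎ = {g : g, 2g, …, ng ∈ C} is quasi-convex; (b) C₍₂ₙ₎ + C₍₂ₙ₎ ⊆ C₍ₙ₎; and (c) ⋂ₙ C₍ₙ₎ is a subgroup of G. -/
open scoped Pointwise Topology
open Complex Real

variable (G : Type*) [AddCommGroup G] [TopologicalSpace G] [IsTopologicalAddGroup G]

/-- A (continuous) character of `G` with values in the circle group. -/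
def IsChar (χ : G → Circle) : Prop :=
  Continuous χ ∧ ∀ x y : G, χ (x + y) = χ x * χ y

/-- `S₊ = {z ∈ S : Re z ≥ 0}`. -/
def Splus : Set Circle := {z | 0 ≤ (z : ℂ).re}

/-- The character group `Ĝ`, as a set of functions `G → Circle`. -/
def charSet : Set (G → Circle) := {χ | IsChar G χ}

/-- The inverse polar `B^◁ = {g ∈ G : χ(g) ∈ S₊ ∀ χ ∈ B}` of a set of characters. -/
def invPolar (B : Set (G → Circle)) : Set G := {g | ∀ χ ∈ B, χ g ∈ Splus}

/-- The polar `A^▷ = {χ ∈ Ĝ : χ(A) ⊆ S₊}` of a subset of `G`. -/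
def polarG (A : Set G) : Set (G → Circle) := {χ | IsChar G χ ∧ ∀ g ∈ A, χ g ∈ Splus}

/-- The `n`-fold sumset `(n)K` of a set of characters (written multiplicatively). -/
def mpow (K : Set (G → Circle)) : ℕ → Set (G → Circle)
  | 0 => {1}
  | n + 1 => mpow K n * K

/-- The `n`-fold sumset `(n)A` of a subset of `G`. -/
def addPow (A : Set G) : ℕ → Set G
  | 0 => {0}
  | n + 1 => addPow A n + A

/-- `C₍ₙ₎ = {g ∈ G : g, 2g, …, ng ∈ C}`. -/
def seg (n : ℕ) (C : Set G) : Set G := {g | ∀ k ∈ Finset.Icc 1 n, k • g ∈ C}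

/-!
For a character `χ` with `χ(C) ⊆ S₊` and `k ≤ n`, the character `χ(k ·)` maps `C₍ₙ₎` into `S₊`;
this makes `C₍ₙ₎` quasi-convex. For (b), if `g ∈ C₍ₘ₎` and `t = arg χ(g)`, then `cos (k t) ≥ 0`
for `k ≤ m`. Once `|t| ≤ π / 2`, the multiples `k |t|` advance by at most `π / 2` and so cannot jump
over the arc where the cosine is negative; hence `m |t| ≤ π / 2`. Angles of elements of `C₍₂ₙ₎`
are thus at most `π / (4n)`, so `k (g + h)` has angle at most `π / 2` for `k ≤ n`. Finally, (b)
together with `0 ∈ C = -C` makes `⋂ₙ C₍ₙ₎` a subgroup.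
-/

lemma le_pi_div_two_of_cos_nonneg {x : ℝ} (hxπ : x ≤ π) (hcos : 0 ≤ Real.cos x) :
    x ≤ π / 2 := by
  by_contra! hlt
  linarith [cos_neg_of_pi_div_two_lt_of_lt hlt (by linarith [pi_pos])]

lemma nat_mul_le_pi_div_two_of_cos_nonneg {s : ℝ} (hs₀ : 0 ≤ s) (hsπ : s ≤ π) :
    ∀ m : ℕ, (∀ k ∈ Finset.Icc 1 m, 0 ≤ Real.cos (k * s)) → m * s ≤ π / 2
  | 0, _ => by simpa using pi_div_two_pos.le
  | m + 1, hcos => by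
    have hm : m * s ≤ π / 2 := nat_mul_le_pi_div_two_of_cos_nonneg hs₀ hsπ m fun k hk =>
      hcos k (Finset.Icc_subset_Icc_right m.le_succ hk)
    have hstep : ((m + 1 : ℕ) : ℝ) * s ≤ π := by
      rcases m.eq_zero_or_pos with rfl | hpos
      · simpa using hsπ
      · have : s ≤ m * s := le_mul_of_one_le_left hs₀ (by exact_mod_cast hpos)
        push_cast
        linarith
    exact le_pi_div_two_of_cos_nonneg hstep
      (hcos (m + 1) (Finset.mem_Icc.mpr ⟨m.succ_pos, le_rfl⟩))

lemma Circle.exp_mem_Splus_iff (t : ℝ) : Circle.exp t ∈ Splus ↔ 0 ≤ Real.cos t := by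
  simp [Splus, Circle.coe_exp, exp_ofReal_mul_I_re]

lemma Circle.exp_mem_Splus_of_abs_le {t : ℝ} (ht : |t| ≤ π / 2) : Circle.exp t ∈ Splus :=
  (exp_mem_Splus_iff t).mpr (cos_nonneg_of_mem_Icc (abs_le.mp ht))

lemma Circle.inv_mem_Splus {z : Circle} (hz : z ∈ Splus) : z⁻¹ ∈ Splus := by
  simpa [Splus] using hz

lemma Circle.nat_mul_abs_arg_le_of_pow_mem_Splus {z : Circle} {m : ℕ}
    (h : ∀ k ∈ Finset.Icc 1 m, z ^ k ∈ Splus) : m * |arg z| ≤ π / 2 := by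
  refine nat_mul_le_pi_div_two_of_cos_nonneg (abs_nonneg _) (abs_arg_le_pi _) m fun k hk => ?_
  rw [← abs_of_nonneg (Nat.cast_nonneg (α := ℝ) k), ← abs_mul, cos_abs, ← exp_mem_Splus_iff,
    exp_natCast_mul, exp_arg]
  exact h k hk

section Characters

variable {G} {χ : G → Circle}

omit [IsTopologicalAddGroup G] in
lemma IsChar.map_zero (hχ : IsChar G χ) : χ 0 = 1 :=
  mul_eq_left.mp (by rw [← hχ.2, add_zero] : χ 0 * χ 0 = χ 0)

def IsChar.toAddChar (hχ : IsChar G χ) : AddChar G Circle where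
  toFun := χ
  map_zero_eq_one' := hχ.map_zero
  map_add_eq_mul' := hχ.2

omit [IsTopologicalAddGroup G] in
lemma IsChar.map_nsmul (hχ : IsChar G χ) (k : ℕ) (g : G) : χ (k • g) = χ g ^ k :=
  hχ.toAddChar.map_nsmul_eq_pow k g

omit [IsTopologicalAddGroup G] in
lemma IsChar.map_neg (hχ : IsChar G χ) (g : G) : χ (-g) = (χ g)⁻¹ :=
  hχ.toAddChar.map_neg_eq_inv g

lemma IsChar.comp_nsmul (hχ : IsChar G χ) (k : ℕ) : IsChar G fun g => χ (k • g) :=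
  ⟨hχ.1.comp (continuous_const_smul k), fun x y => by simp only [smul_add, hχ.2]⟩

end Characters

section QuasiConvex

variable {G} {C : Set G}

omit [IsTopologicalAddGroup G] in
lemma subset_invPolar_polarG (A : Set G) : A ⊆ invPolar G (polarG G A) :=
  fun g hg _ hχ => hχ.2 g hg

omit [IsTopologicalAddGroup G] in
lemma zero_mem_of_quasiConvex (hC : C = invPolar G (polarG G C)) : (0 : G) ∈ C := by
  rw [hC]
  intro χ hχ
  simp [hχ.1.map_zero, Splus]

omit [IsTopologicalAddGroup G] in
lemma neg_mem_of_quasiConvex (hC : C = invPolar G (polarG G C)) {g : G} (hg : g ∈ C) :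
    -g ∈ C := by
  rw [hC]
  intro χ hχ
  rw [hχ.1.map_neg]
  exact Circle.inv_mem_Splus (hχ.2 g hg)

lemma seg_eq_invPolar_polarG (hC : C = invPolar G (polarG G C)) (n : ℕ) :
    seg G n C = invPolar G (polarG G (seg G n C)) := by
  refine (subset_invPolar_polarG _).antisymm fun g hg k hk => ?_
  rw [hC]
  intro χ hχ
  exact hg _ ⟨hχ.1.comp_nsmul k, fun h hh => hχ.2 _ (hh k hk)⟩

omit [IsTopologicalAddGroup G] in
lemma nat_mul_abs_arg_le_of_mem_seg {χ : G → Circle} (hχ : χ ∈ polarG G C) {m : ℕ} {g : G}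
    (hg : g ∈ seg G m C) : m * |arg (χ g)| ≤ π / 2 :=
  Circle.nat_mul_abs_arg_le_of_pow_mem_Splus fun k hk => hχ.1.map_nsmul k g ▸ hχ.2 _ (hg k hk)

omit [IsTopologicalAddGroup G] in
lemma seg_two_mul_add_subset (hC : C = invPolar G (polarG G C)) (n : ℕ) :
    seg G (2 * n) C + seg G (2 * n) C ⊆ seg G n C := by
  rintro _ ⟨g, hg, h, hh, rfl⟩ k hk
  obtain ⟨-, hkn⟩ := Finset.mem_Icc.mp hk
  rw [hC]
  intro χ hχ
  set a := arg (χ g)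
  set b := arg (χ h)
  have ha : 2 * n * |a| ≤ π / 2 := by exact_mod_cast nat_mul_abs_arg_le_of_mem_seg hχ hg
  have hb : 2 * n * |b| ≤ π / 2 := by exact_mod_cast nat_mul_abs_arg_le_of_mem_seg hχ hh
  have hangle : χ (k • (g + h)) = Circle.exp (k * (a + b)) := by
    rw [hχ.1.map_nsmul, hχ.1.2, ← Circle.exp_arg (χ g), ← Circle.exp_arg (χ h),
      ← Circle.exp_add, Circle.exp_natCast_mul]
  rw [hangle]
  apply Circle.exp_mem_Splus_of_abs_le
  have hkn' : (k : ℝ) ≤ n := by exact_mod_cast hkn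
  calc |(k : ℝ) * (a + b)| = k * |a + b| := by rw [abs_mul, Nat.abs_cast]
    _ ≤ n * (|a| + |b|) := by gcongr; exact abs_add_le a b
    _ ≤ π / 2 := by linarith

omit [IsTopologicalAddGroup G] in
def iInterSegAddSubgroup (hC : C = invPolar G (polarG G C)) : AddSubgroup G where
  carrier := ⋂ (m : ℕ) (_ : 0 < m), seg G m C
  zero_mem' := by
    simpa [Set.mem_iInter₂, seg] using fun _ _ _ _ _ => zero_mem_of_quasiConvex hC
  neg_mem' {g} hg := by
    simp only [Set.mem_iInter₂] at hg ⊢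
    intro m hm k hk
    rw [smul_neg]
    exact neg_mem_of_quasiConvex hC (hg m hm k hk)
  add_mem' {g h} hg hh := by
    simp only [Set.mem_iInter₂] at hg hh ⊢
    intro m hm
    exact seg_two_mul_add_subset hC m ⟨g, hg (2 * m) (by omega), h, hh (2 * m) (by omega), rfl⟩

end QuasiConvex

theorem stmt6 (C : Set G) (hC : C = invPolar G (polarG G C)) (n : ℕ) :
    seg G n C = invPolar G (polarG G (seg G n C)) ∧
      seg G (2 * n) C + seg G (2 * n) C ⊆ seg G n C ∧
      ∃ H : AddSubgroup G, (H : Set G) = ⋂ (m : ℕ) (_ : 0 < m), seg G m C :=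
  ⟨seg_eq_invPolar_polarG hC n, seg_two_mul_add_subset hC n, iInterSegAddSubgroup hC, rfl⟩
end

section
/- Let G be an abelian topological group, C ⊆ G with 0 ∈ C, and n a positive integer. Then ((n)C)^▷ = (C^▷)₍ₙ₎, where C^▷ = {χ ∈ Ĝ : χ(C) ⊆ S₊} is the polar of C and (C^▷)₍ₙ₎ = {χ : χ, 2χ, …, nχ ∈ C^▷}. -/
open scoped Pointwise Topology
open Complex Real

variable (G : Type*) [AddCommGroup G] [TopologicalSpace G] [IsTopologicalAddGroup G]

/-- `A₍ₙ₎ = {χ : χ, 2χ, …, nχ ∈ A}` for a set of characters. -/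
def segMul (n : ℕ) (A : Set (G → Circle)) : Set (G → Circle) :=
  {χ | ∀ k ∈ Finset.Icc 1 n, χ ^ k ∈ A}

/-! Write `χ(c) = exp(iθ)` with `|θ| ≤ π`. If `χ, 2χ, …, nχ` all map `c` into `S₊`, that is,
`cos(kθ) ≥ 0` for `1 ≤ k ≤ n`, then `n|θ| ≤ π/2`: otherwise `|θ| ≤ π/2` (take `k = 1`) and the
first multiple `k|θ|` beyond `π/2` lies in `(π/2, π]`, where the cosine is negative. Hence `χ` has
angle at most `π/(2n)` on `C`, and so angle at most `π/2` on `(n)C`. Conversely, since `0 ∈ C`,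
`k • c ∈ (n)C` for `c ∈ C` and `k ≤ n`, and `(kχ)(c) = χ(k • c)`. -/

namespace Real

theorem nat_mul_le_pi_div_two_of_forall_cos_nonneg {s : ℝ} (hs₀ : 0 ≤ s) (hsπ : s ≤ π) {n : ℕ}
    (h : ∀ k ∈ Finset.Icc 1 n, 0 ≤ cos (k * s)) : n * s ≤ π / 2 := by
  by_contra! hns
  have hs : 0 < s := pos_of_mul_pos_right (by linarith [pi_pos]) n.cast_nonneg
  set k := ⌊π / 2 / s⌋₊ + 1 with hk
  have hk_le : k ≤ n := (Nat.floor_lt (by positivity)).mpr ((div_lt_iff₀ hs).mpr hns)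
  have hs_le : s ≤ π / 2 := by
    by_contra! hgt
    have hcos := h 1 (Finset.mem_Icc.mpr ⟨le_rfl, (Nat.le_add_left 1 _).trans hk_le⟩)
    rw [Nat.cast_one, one_mul] at hcos
    linarith [cos_neg_of_pi_div_two_lt_of_lt hgt (by linarith [pi_pos])]
  have hk_gt : π / 2 < k * s := by
    have := Nat.lt_floor_add_one (π / 2 / s)
    rwa [div_lt_iff₀ hs, ← Nat.cast_add_one] at this
  have hk_lt : k * s < π + π / 2 := by
    have := (le_div_iff₀ hs).mp (Nat.floor_le (by positivity : 0 ≤ π / 2 / s))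
    rw [hk, Nat.cast_add_one]
    linarith
  have hcos := h k (Finset.mem_Icc.mpr ⟨Nat.le_add_left 1 _, hk_le⟩)
  linarith [cos_neg_of_pi_div_two_lt_of_lt hk_gt hk_lt]

end Real

namespace Circle

theorem re_exp (t : ℝ) : (exp t : ℂ).re = Real.cos t :=
  Complex.exp_ofReal_mul_I_re t

theorem exp_mem_Splus {t : ℝ} (ht : |t| ≤ π / 2) : exp t ∈ Splus := by
  rw [Splus, Set.mem_ofPred_eq, re_exp]
  exact Real.cos_nonneg_of_mem_Icc (abs_le.mp ht)

theorem nat_mul_abs_arg_le_pi_div_two {z : Circle} {n : ℕ}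
    (h : ∀ k ∈ Finset.Icc 1 n, z ^ k ∈ Splus) : n * |arg (z : ℂ)| ≤ π / 2 := by
  refine Real.nat_mul_le_pi_div_two_of_forall_cos_nonneg (abs_nonneg _) (abs_arg_le_pi _)
    fun k hk ↦ ?_
  have hzk : 0 ≤ ((z ^ k : Circle) : ℂ).re := h k hk
  rwa [← exp_arg z, ← exp_natCast_mul, re_exp, ← Real.cos_abs, abs_mul, Nat.abs_cast] at hzk

end Circle

section AddCommGroup

variable {G : Type*} [AddCommGroup G] {C : Set G}

theorem addPow_mono (hC0 : (0 : G) ∈ C) : Monotone (addPow G C) :=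
  monotone_nat_of_le_succ fun _ g hg ↦ ⟨g, hg, 0, hC0, add_zero g⟩

theorem nsmul_mem_addPow {c : G} (hc : c ∈ C) (k : ℕ) : k • c ∈ addPow G C k := by
  induction k with
  | zero => simp [addPow]
  | succ k ih => exact succ_nsmul c k ▸ Set.add_mem_add ih hc

end AddCommGroup

section Characters

variable {G : Type*} [AddCommGroup G] [TopologicalSpace G] {χ : G → Circle}

namespace IsChar

theorem map_zero_s8 (hχ : IsChar G χ) : χ 0 = 1 :=
  mul_eq_left.mp (by rw [← hχ.2 0 0, add_zero])

theorem map_nsmul_s8 (hχ : IsChar G χ) (k : ℕ) (g : G) : χ (k • g) = χ g ^ k := by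
  induction k with
  | zero => simp [hχ.map_zero_s8]
  | succ k ih => rw [succ_nsmul, hχ.2, ih, pow_succ]

theorem pow (hχ : IsChar G χ) (k : ℕ) : IsChar G (χ ^ k) :=
  ⟨hχ.1.pow k, fun x y ↦ by simp only [Pi.pow_apply, hχ.2 x y, mul_pow]⟩

theorem exists_exp_of_mem_addPow (hχ : IsChar G χ) {C : Set G} {δ : ℝ}
    (hC : ∀ c ∈ C, ∃ t : ℝ, |t| ≤ δ ∧ χ c = Circle.exp t) {m : ℕ} {g : G}
    (hg : g ∈ addPow G C m) : ∃ t : ℝ, |t| ≤ m * δ ∧ χ g = Circle.exp t := by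
  induction m generalizing g with
  | zero =>
    rw [addPow, Set.mem_singleton_iff] at hg
    exact ⟨0, by simp, by simp [hg, hχ.map_zero_s8]⟩
  | succ m ih =>
    obtain ⟨a, ha, c, hc, rfl⟩ := hg
    obtain ⟨s, hs, hχa⟩ := ih ha
    obtain ⟨t, ht, hχc⟩ := hC c hc
    refine ⟨s + t, ?_, by rw [hχ.2, hχa, hχc, Circle.exp_add]⟩
    calc |s + t| ≤ |s| + |t| := abs_add_le s t
      _ ≤ m * δ + δ := add_le_add hs ht
      _ = (m + 1 : ℕ) * δ := by push_cast; ring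

end IsChar

theorem polarG_addPow_subset_segMul {C : Set G} (hC0 : (0 : G) ∈ C) (n : ℕ) :
    polarG G (addPow G C n) ⊆ segMul G n (polarG G C) := by
  rintro χ ⟨hχ, hχC⟩ k hk
  refine ⟨hχ.pow k, fun c hc ↦ ?_⟩
  rw [Pi.pow_apply, ← hχ.map_nsmul_s8]
  exact hχC _ (addPow_mono hC0 (Finset.mem_Icc.mp hk).2 (nsmul_mem_addPow hc k))

theorem segMul_polarG_subset_polarG_addPow {C : Set G} {n : ℕ} (hn : 0 < n) :
    segMul G n (polarG G C) ⊆ polarG G (addPow G C n) := by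
  intro χ hχC
  have hχ : IsChar G χ := pow_one χ ▸ (hχC 1 (Finset.mem_Icc.mpr ⟨le_rfl, hn⟩)).1
  have hC : ∀ c ∈ C, ∃ t : ℝ, |t| ≤ π / (2 * n) ∧ χ c = Circle.exp t := fun c hc ↦
    ⟨arg (χ c : ℂ), (le_div_iff₀ (by positivity)).mpr <| by
      linarith [Circle.nat_mul_abs_arg_le_pi_div_two fun k hk ↦ (hχC k hk).2 c hc],
      (Circle.exp_arg _).symm⟩
  refine ⟨hχ, fun g hg ↦ ?_⟩
  obtain ⟨t, ht, hχg⟩ := hχ.exists_exp_of_mem_addPow hC hg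
  rw [hχg]
  exact Circle.exp_mem_Splus (ht.trans_eq (by field_simp))

end Characters

theorem stmt8 (C : Set G) (hC0 : (0 : G) ∈ C) (n : ℕ) (hn : 0 < n) :
    polarG G (addPow G C n) = segMul G n (polarG G C) :=
  (polarG_addPow_subset_segMul hC0 n).antisymm (segMul_polarG_subset_polarG_addPow hn)
end

section
/- Let (G, τ) be an abelian topological group of finite exponent, K ⊆ Ĝ a quasi-convex subset containing 0, and n a natural number with n > exp(G). Then ((n)K)^◁ = ⟨K⟩^⊤, i.e., g satisfies χ₁(g)⋯χₙ(g) ∈ S₊ for all χ₁,…,χₙ ∈ K if and only if χ(g) = 1 for all χ ∈ K. -/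
open scoped Pointwise Topology
open Complex Real

variable (G : Type*) [AddCommGroup G] [TopologicalSpace G] [IsTopologicalAddGroup G]

/-!
Since `G` has finite exponent `e`, every value `z = χ g` of a character is an `e`-th root of unity.
If `z ≠ 1`, then `1 + z + ⋯ + z^(e-1) = 0`, so the real parts of `z, …, z^(e-1)` sum to `-1` and
some power `z^k` with `0 < k < e` has negative real part. As `1 ∈ K`, the character
`χ^k = χ ⋯ χ · 1 ⋯ 1` lies in `(n)K` for `n > e`, so `g ∉ ((n)K)^◁`.
-/

theorem Complex.exists_re_pow_neg_of_pow_eq_one {z : ℂ} {e : ℕ} (he : e ≠ 0) (hze : z ^ e = 1)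
    (hz : z ≠ 1) : ∃ k, 0 < k ∧ k < e ∧ (z ^ k).re < 0 := by
  have hsum : ∑ k ∈ Finset.range e, z ^ k = 0 := by
    have h := geom_sum_mul z e
    rw [hze, sub_self] at h
    exact (mul_eq_zero.mp h).resolve_right (sub_ne_zero.mpr hz)
  obtain ⟨m, rfl⟩ := Nat.exists_eq_succ_of_ne_zero he
  by_contra! hre
  have hnonneg : 0 ≤ ∑ k ∈ Finset.range m, (z ^ (k + 1)).re :=
    Finset.sum_nonneg fun k hk => hre (k + 1) k.succ_pos (by simpa using Finset.mem_range.mp hk)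
  have hre_sum := congrArg Complex.re hsum
  rw [Complex.re_sum, Finset.sum_range_succ'] at hre_sum
  simp only [pow_zero, Complex.one_re, Complex.zero_re] at hre_sum
  linarith

theorem pow_exponent_eq_one_of_map_add {M N : Type*} [AddMonoid M] [LeftCancelMonoid N]
    {χ : M → N} (hχ : ∀ x y, χ (x + y) = χ x * χ y) (g : M) :
    χ g ^ AddMonoid.exponent M = 1 := by
  have map_nsmul (k : ℕ) : χ (k • g) = χ g ^ k := by
    induction k with
    | zero => simpa using (hχ 0 0).symm
    | succ k ih => rw [succ_nsmul, hχ, ih, pow_succ]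
  rw [← map_nsmul, AddMonoid.exponent_nsmul_eq_zero]
  simpa using (hχ 0 0).symm

section mpow

variable {A : Type*} {K : Set (A → Circle)}

theorem mpow_mono (hK1 : 1 ∈ K) : Monotone (mpow A K) :=
  monotone_nat_of_le_succ fun m f hf => by simpa [mpow] using Set.mul_mem_mul hf hK1

theorem pow_mem_mpow {χ : A → Circle} (hχ : χ ∈ K) : ∀ k, χ ^ k ∈ mpow A K k
  | 0 => rfl
  | k + 1 => by rw [pow_succ]; exact Set.mul_mem_mul (pow_mem_mpow hχ k) hχ

theorem apply_eq_one_of_mem_mpow {g : A} (hg : ∀ χ ∈ K, χ g = 1) :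
    ∀ {m} {f}, f ∈ mpow A K m → f g = 1
  | 0, _, rfl => rfl
  | _ + 1, _, ⟨f, hf, χ, hχ, rfl⟩ => by
    simp [apply_eq_one_of_mem_mpow hg hf, hg χ hχ]

end mpow

theorem stmt19 (hexp : AddMonoid.exponent G ≠ 0)
    (K : Set (G → Circle)) (hK : K ⊆ charSet G) (hK1 : (1 : G → Circle) ∈ K)
    (n : ℕ) (hn : AddMonoid.exponent G < n) :
    invPolar G (mpow G K n) = {g : G | ∀ χ ∈ K, χ g = 1} := by
  ext g
  refine ⟨fun hg χ hχ => ?_, fun hg f hf => ?_⟩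
  · by_contra hne
    have hroot : (χ g : ℂ) ^ AddMonoid.exponent G = 1 := by
      rw [← Circle.coe_pow, pow_exponent_eq_one_of_map_add (hK hχ).2, Circle.coe_one]
    obtain ⟨k, -, hke, hre⟩ := Complex.exists_re_pow_neg_of_pow_eq_one hexp hroot
      (by rwa [Ne, Circle.coe_eq_one])
    have hsplus : 0 ≤ ((χ g ^ k : Circle) : ℂ).re :=
      hg (χ ^ k) (mpow_mono hK1 (hke.trans hn).le (pow_mem_mpow hχ k))
    rw [Circle.coe_pow] at hsplus
    exact hre.not_ge hsplus
  · simp [Splus, apply_eq_one_of_mem_mpow hg hf]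
end
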